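/- Assume MD, SCD*, the boundary assumptions, and that φ(b,t1) < φ(b',t1) whenever b ⊊ b'. Suppose there exists a nonempty bundle b_r such that: (1) t_{b_r} < t_b for every nonempty bundle b ≠ b_r (b_r has the strictly largest sold-alone quantity); and (2) for every nonempty bundle b with ¬(b_r ⊆ b), t_{b∪b_r} ≤ max{t_b, t_{b_r}} (the sold-alone quantity of b∪b_r is at least the minimum of those of b and b_r). Then the minimal optimal menu is either a tree menu or a nested menu. -/

import Mathlib

/-!
Just above its cutoff `t_{b_r}`, the bundle `b_r` is the only one with positive virtual value,
so every optimal menu contains it. Suppose a nonempty `b` in a minimal optimal menu misses `b_r`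
and put `c = b ∪ b_r`. Minimality gives a type `y` at which `b` is a best response strictly
beating every other menu item, in particular `b_r`; since `φ(b, y) ≥ 0`, `t_b ≤ y`. The union
condition gives `t_c ≤ t_b`, so `φ(c, ·) - φ(b, ·)` is `≥ 0` at `t_b`, `≤ 0` at `y` and `> 0` at
`t1`, while `φ(b_r, ·) - φ(b, ·)` is `> 0` at `t_b` and `< 0` at `y`. Mixing a little of `b_r`
into `c` yields a stochastic bundle whose difference with `b` has sign `+ - +`, against SCD*.
Hence `b_r` is a root of the menu, and a menu that is not nested is a tree.
-/

namespace Paper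

abbrev Bundle (n : ℕ) := Finset (Fin n)

variable {n : ℕ}

/-- A stochastic bundle: nonnegative weights on bundles summing to one. -/
def IsStoch (a : Bundle n → ℝ) : Prop :=
  (∀ b, 0 ≤ a b) ∧ ∑ b, a b = 1

/-- The point mass at a bundle, viewed as a stochastic bundle. -/
def pt (b : Bundle n) : Bundle n → ℝ := fun b' => if b' = b then 1 else 0

/-- Virtual value of a stochastic bundle (linear extension). -/
def phiA (φ : Bundle n → ℝ → ℝ) (a : Bundle n → ℝ) (t : ℝ) : ℝ :=
  ∑ b, a b * φ b t

/-- A function is single-crossing on a set: its sign is monotone there. -/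
def SingleCrossingOn (g : ℝ → ℝ) (T : Set ℝ) : Prop :=
  MonotoneOn (fun t => Real.sign (g t)) T ∨ AntitoneOn (fun t => Real.sign (g t)) T

/-- Assumption SCD*: differences of virtual values of stochastic bundles are
single-crossing in the type. -/
def SCDstar (φ : Bundle n → ℝ → ℝ) (t0 t1 : ℝ) : Prop :=
  ∀ a a' : Bundle n → ℝ, IsStoch a → IsStoch a' →
    SingleCrossingOn (fun t => phiA φ a t - phiA φ a' t) (Set.Icc t0 t1)

/-- Assumption MD: differences of virtual values of deterministic bundles are
monotone in the type. -/
def MD (φ : Bundle n → ℝ → ℝ) (t0 t1 : ℝ) : Prop :=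
  ∀ b b' : Bundle n,
    MonotoneOn (fun t => φ b t - φ b' t) (Set.Icc t0 t1) ∨
    AntitoneOn (fun t => φ b t - φ b' t) (Set.Icc t0 t1)

/-- No two distinct bundles have identical virtual value functions on T. -/
def Distinct (φ : Bundle n → ℝ → ℝ) (t0 t1 : ℝ) : Prop :=
  ∀ b b' : Bundle n, b ≠ b' → ∃ t ∈ Set.Icc t0 t1, φ b t ≠ φ b' t

/-- A stochastic bundle is very weakly dominated. -/
def VWD (φ : Bundle n → ℝ → ℝ) (t0 t1 : ℝ) (a : Bundle n → ℝ) : Prop :=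
  ∃ a' : Bundle n → ℝ, IsStoch a' ∧ a' ≠ a ∧
    ∀ t ∈ Set.Icc t0 t1, phiA φ a t ≤ phiA φ a' t

/-- A bundle is a never strict best response. -/
def NeverStrictBR (φ : Bundle n → ℝ → ℝ) (t0 t1 : ℝ) (b : Bundle n) : Prop :=
  ∀ t ∈ Set.Icc t0 t1, ∃ b' : Bundle n, b' ≠ b ∧ φ b t ≤ φ b' t

/-- A menu is optimal if at every type some element attains the upper envelope. -/
def OptimalMenu (φ : Bundle n → ℝ → ℝ) (t0 t1 : ℝ) (S : Finset (Bundle n)) : Prop :=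
  ∀ t ∈ Set.Icc t0 t1, ∃ b ∈ S, ∀ b' : Bundle n, φ b' t ≤ φ b t

/-- A minimal optimal menu. -/
def MinimalOptimalMenu (φ : Bundle n → ℝ → ℝ) (t0 t1 : ℝ) (S : Finset (Bundle n)) : Prop :=
  OptimalMenu φ t0 t1 S ∧ ∀ S' : Finset (Bundle n), S' ⊂ S → ¬ OptimalMenu φ t0 t1 S'

/-- A nested menu: any two elements are comparable under set inclusion. -/
def IsNestedMenu (S : Finset (Bundle n)) : Prop :=
  ∀ b1 ∈ S, ∀ b2 ∈ S, b1 ⊆ b2 ∨ b2 ⊆ b1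

/-- A tree menu: a nonempty root contained in every nonempty element, and two
incomparable elements. -/
def IsTreeMenu (S : Finset (Bundle n)) : Prop :=
  (∃ r ∈ S, r ≠ (∅ : Bundle n) ∧ ∀ b ∈ S, b ≠ (∅ : Bundle n) → r ⊆ b) ∧
  (∃ b1 ∈ S, ∃ b2 ∈ S, ¬ b1 ⊆ b2 ∧ ¬ b2 ⊆ b1)

open Set Filter Topology

theorem pos_of_unique_zero_lt {f : ℝ → ℝ} {a b z s : ℝ} (hf : ContinuousOn f (Icc a b))
    (hb : 0 < f b) (hz : ∀ r ∈ Icc a b, f r = 0 → r = z) (hs : s ∈ Icc a b) (hzs : z < s) :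
    0 < f s := by
  by_contra! h
  obtain ⟨r, hr, hr0⟩ := intermediate_value_Icc hs.2 (hf.mono (Icc_subset_Icc hs.1 le_rfl))
    ⟨h, hb.le⟩
  have := hz r ⟨hs.1.trans hr.1, hr.2⟩ hr0
  linarith [hr.1]

theorem neg_of_lt_unique_zero {f : ℝ → ℝ} {a b z s : ℝ} (hf : ContinuousOn f (Icc a b))
    (ha : f a < 0) (hz : ∀ r ∈ Icc a b, f r = 0 → r = z) (hs : s ∈ Icc a b) (hsz : s < z) :
    f s < 0 := by
  by_contra! h
  obtain ⟨r, hr, hr0⟩ := intermediate_value_Icc hs.1 (hf.mono (Icc_subset_Icc le_rfl hs.2))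
    ⟨ha.le, h⟩
  have := hz r ⟨hr.1, hr.2.trans hs.2⟩ hr0
  linarith [hr.2]

theorem SingleCrossingOn.false_of_pos_neg_pos {g : ℝ → ℝ} {T : Set ℝ}
    (hg : SingleCrossingOn g T) {x y z : ℝ} (hx : x ∈ T) (hy : y ∈ T) (hz : z ∈ T)
    (hxy : x ≤ y) (hyz : y ≤ z) (hgx : 0 < g x) (hgy : g y < 0) (hgz : 0 < g z) : False := by
  rcases hg with hmono | hanti
  · have := hmono hx hy hxy
    simp only [Real.sign_of_pos hgx, Real.sign_of_neg hgy] at this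
    norm_num at this
  · have := hanti hy hz hyz
    simp only [Real.sign_of_neg hgy, Real.sign_of_pos hgz] at this
    norm_num at this

theorem exists_pos_weight_mix_pos {p q : ℝ} (hq : 0 < q) :
    ∃ l : ℝ, 0 < l ∧ l ≤ 1 ∧ 0 < l * p + (1 - l) * q := by
  have hlim : Tendsto (fun l : ℝ => l * p + (1 - l) * q) (𝓝 0) (𝓝 q) := by
    have hcont : Continuous fun l : ℝ => l * p + (1 - l) * q := by fun_prop
    simpa using hcont.tendsto 0
  have hev : ∀ᶠ l in 𝓝[>] (0 : ℝ), 0 < l ∧ l ≤ 1 ∧ 0 < l * p + (1 - l) * q :=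
    eventually_mem_nhdsWithin.and (nhdsWithin_le_nhds
      ((eventually_le_nhds zero_lt_one).and (hlim.eventually (lt_mem_nhds hq))))
  exact hev.exists

variable {φ : Bundle n → ℝ → ℝ} {t0 t1 : ℝ}

theorem phiA_pt (b : Bundle n) (t : ℝ) : phiA φ (pt b) t = φ b t := by
  simp [phiA, pt]

theorem phiA_add_smul (l m : ℝ) (a a' : Bundle n → ℝ) (t : ℝ) :
    phiA φ (l • a + m • a') t = l * phiA φ a t + m * phiA φ a' t := by
  simp only [phiA, Pi.add_apply, Pi.smul_apply, smul_eq_mul, add_mul, Finset.sum_add_distrib,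
    Finset.mul_sum, mul_assoc]

theorem isStoch_pt (b : Bundle n) : IsStoch (pt b) :=
  ⟨fun b' => by unfold pt; split_ifs <;> norm_num, by simp [pt]⟩

theorem IsStoch.convex_comb {a a' : Bundle n → ℝ} (ha : IsStoch a) (ha' : IsStoch a') {l : ℝ}
    (hl0 : 0 ≤ l) (hl1 : l ≤ 1) : IsStoch (l • a + (1 - l) • a') := by
  refine ⟨fun b => ?_, ?_⟩
  · have := ha.1 b
    have := ha'.1 b
    simp only [Pi.add_apply, Pi.smul_apply, smul_eq_mul]
    nlinarith
  · simp only [Pi.add_apply, Pi.smul_apply, smul_eq_mul, Finset.sum_add_distrib,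
      ← Finset.mul_sum, ha.2, ha'.2]
    ring

theorem SCDstar.false_of_sign_pattern (hscd : SCDstar φ t0 t1) {b c r : Bundle n} {x y z : ℝ}
    (hx : x ∈ Icc t0 t1) (hz : z ∈ Icc t0 t1) (hxy : x ≤ y) (hyz : y ≤ z)
    (hcx : φ b x ≤ φ c x) (hrx : φ b x < φ r x) (hcy : φ c y ≤ φ b y) (hry : φ r y < φ b y)
    (hcz : φ b z < φ c z) : False := by
  obtain ⟨l, hl0, hl1, hlz⟩ := exists_pos_weight_mix_pos (p := φ r z - φ b z) (sub_pos.2 hcz)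
  have hmix : ∀ t, phiA φ (l • pt r + (1 - l) • pt c) t - phiA φ (pt b) t
      = l * (φ r t - φ b t) + (1 - l) * (φ c t - φ b t) := fun t => by
    rw [phiA_add_smul, phiA_pt, phiA_pt, phiA_pt]
    ring
  have hy : y ∈ Icc t0 t1 := ⟨hx.1.trans hxy, hyz.trans hz.2⟩
  refine (hscd _ _ ((isStoch_pt r).convex_comb (isStoch_pt c) hl0.le hl1) (isStoch_pt b)
    ).false_of_pos_neg_pos hx hy hz hxy hyz ?_ ?_ ?_ <;> simp only [hmix]
  · nlinarith
  · nlinarith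
  · linarith

theorem OptimalMenu.mem_of_forall_lt {S : Finset (Bundle n)} (hS : OptimalMenu φ t0 t1 S)
    {b : Bundle n} {t : ℝ} (ht : t ∈ Icc t0 t1) (hb : ∀ b', b' ≠ b → φ b' t < φ b t) :
    b ∈ S := by
  obtain ⟨b', hb'S, hb'⟩ := hS t ht
  by_contra hbS
  exact (hb b' (ne_of_mem_of_not_mem hb'S hbS)).not_ge (hb' b)

theorem MinimalOptimalMenu.exists_strict_best {S : Finset (Bundle n)}
    (hS : MinimalOptimalMenu φ t0 t1 S) {b : Bundle n} (hb : b ∈ S) :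
    ∃ t ∈ Icc t0 t1, (∀ b', φ b' t ≤ φ b t) ∧ ∀ x ∈ S, x ≠ b → φ x t < φ b t := by
  have hnot := hS.2 (S.erase b) (Finset.erase_ssubset hb)
  simp only [OptimalMenu] at hnot
  push Not at hnot
  obtain ⟨t, ht, hbeaten⟩ := hnot
  obtain ⟨b₀, hb₀S, hb₀⟩ := hS.1 t ht
  have hb₀b : b₀ = b := by
    by_contra h
    obtain ⟨b', hb'⟩ := hbeaten b₀ (Finset.mem_erase.2 ⟨h, hb₀S⟩)
    exact hb'.not_ge (hb₀ b')
  subst hb₀b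
  refine ⟨t, ht, hb₀, fun x hx hxb => ?_⟩
  obtain ⟨b', hb'⟩ := hbeaten x (Finset.mem_erase.2 ⟨hxb, hx⟩)
  exact hb'.trans_le (hb₀ b')

variable {tz : Bundle n → ℝ}

theorem OptimalMenu.mem_of_tz_lt {S : Finset (Bundle n)} (hS : OptimalMenu φ t0 t1 S)
    (hcont : ∀ b : Bundle n, ContinuousOn (φ b) (Icc t0 t1))
    (hempty : ∀ t ∈ Icc t0 t1, φ (∅ : Bundle n) t = 0)
    (hneg : ∀ b : Bundle n, b ≠ ∅ → φ b t0 < 0) (hpos : ∀ b : Bundle n, b ≠ ∅ → 0 < φ b t1)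
    (htz_mem : ∀ b : Bundle n, b ≠ ∅ → tz b ∈ Ioo t0 t1)
    (htz_uniq : ∀ b : Bundle n, b ≠ ∅ → ∀ s ∈ Icc t0 t1, φ b s = 0 → s = tz b)
    {br : Bundle n} (hbr : br ≠ ∅) (hroot : ∀ b : Bundle n, b ≠ ∅ → b ≠ br → tz br < tz b) :
    br ∈ S := by
  have hev : ∀ᶠ t in 𝓝[>] tz br, tz br < t ∧ t < t1 ∧ ∀ b, b ≠ ∅ → b ≠ br → t < tz b :=
    eventually_mem_nhdsWithin.and <| nhdsWithin_le_nhds <|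
      (eventually_lt_nhds (htz_mem br hbr).2).and <| eventually_all.2 fun b =>
        eventually_imp_distrib_left.2 fun hb => eventually_imp_distrib_left.2 fun hbbr =>
          eventually_lt_nhds (hroot b hb hbbr)
  obtain ⟨t, hbrt, ht1, hlt⟩ := hev.exists
  have ht : t ∈ Icc t0 t1 := ⟨(htz_mem br hbr).1.le.trans hbrt.le, ht1.le⟩
  have hbr_pos : 0 < φ br t :=
    pos_of_unique_zero_lt (hcont br) (hpos br hbr) (htz_uniq br hbr) ht hbrt
  refine hS.mem_of_forall_lt ht fun b hbbr => ?_
  by_cases hb : b = ∅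
  · rwa [hb, hempty t ht]
  · exact (neg_of_lt_unique_zero (hcont b) (hneg b hb) (htz_uniq b hb) ht (hlt b hb hbbr)).trans
      hbr_pos

theorem MinimalOptimalMenu.subset_of_mem {S : Finset (Bundle n)}
    (hS : MinimalOptimalMenu φ t0 t1 S)
    (hcont : ∀ b : Bundle n, ContinuousOn (φ b) (Icc t0 t1))
    (hscd : SCDstar φ t0 t1)
    (hempty : ∀ t ∈ Icc t0 t1, φ (∅ : Bundle n) t = 0)
    (hneg : ∀ b : Bundle n, b ≠ ∅ → φ b t0 < 0) (hpos : ∀ b : Bundle n, b ≠ ∅ → 0 < φ b t1)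
    (htz_mem : ∀ b : Bundle n, b ≠ ∅ → tz b ∈ Ioo t0 t1)
    (htz_zero : ∀ b : Bundle n, b ≠ ∅ → φ b (tz b) = 0)
    (htz_uniq : ∀ b : Bundle n, b ≠ ∅ → ∀ s ∈ Icc t0 t1, φ b s = 0 → s = tz b)
    (hmono : ∀ b b' : Bundle n, b ⊂ b' → φ b t1 < φ b' t1)
    {br : Bundle n} (hbr : br ≠ ∅) (hbrS : br ∈ S)
    (hroot1 : ∀ b : Bundle n, b ≠ ∅ → b ≠ br → tz br < tz b)
    (hroot2 : ∀ b : Bundle n, b ≠ ∅ → ¬ br ⊆ b → tz (b ∪ br) ≤ max (tz b) (tz br))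
    {b : Bundle n} (hbS : b ∈ S) (hb : b ≠ ∅) : br ⊆ b := by
  by_contra hsub
  have hbbr : b ≠ br := fun h => hsub h.ge
  have hc : b ∪ br ≠ ∅ := fun h => hbr (Finset.union_eq_empty.1 h).2
  obtain ⟨y, hy, hbest, hstrict⟩ := hS.exists_strict_best hbS
  have hx : tz b ∈ Icc t0 t1 := Ioo_subset_Icc_self (htz_mem b hb)
  have hbrx : tz br < tz b := hroot1 b hb hbbr
  have hxy : tz b ≤ y := by
    by_contra! h
    have := neg_of_lt_unique_zero (hcont b) (hneg b hb) (htz_uniq b hb) hy h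
    linarith [hbest ∅, hempty y hy]
  have hcx : 0 ≤ φ (b ∪ br) (tz b) := by
    have hle : tz (b ∪ br) ≤ tz b := by simpa [hbrx.le] using hroot2 b hb hsub
    rcases hle.eq_or_lt with heq | hlt
    · rw [← heq, htz_zero _ hc]
    · exact (pos_of_unique_zero_lt (hcont _) (hpos _ hc) (htz_uniq _ hc) hx hlt).le
  refine hscd.false_of_sign_pattern (c := b ∪ br) (r := br) hx ⟨hy.1.trans hy.2, le_rfl⟩ hxy hy.2
    (by rwa [htz_zero b hb]) ?_ (hbest _) (hstrict br hbrS hbbr.symm) (hmono _ _ ?_)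
  · rw [htz_zero b hb]
    exact pos_of_unique_zero_lt (hcont br) (hpos br hbr) (htz_uniq br hbr) hx hbrx
  · refine Finset.ssubset_iff_subset_ne.2 ⟨Finset.subset_union_left, fun h => hsub ?_⟩
    rw [h]
    exact Finset.subset_union_right

theorem stmt12_general {n : ℕ} (t0 t1 : ℝ)
    (φ : Bundle n → ℝ → ℝ)
    (hcont : ∀ b : Bundle n, ContinuousOn (φ b) (Set.Icc t0 t1))
    (hscd : SCDstar φ t0 t1)
    (hempty : ∀ t ∈ Set.Icc t0 t1, φ (∅ : Bundle n) t = 0)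
    (hneg : ∀ b : Bundle n, b ≠ ∅ → φ b t0 < 0)
    (hpos : ∀ b : Bundle n, b ≠ ∅ → 0 < φ b t1)
    (tz : Bundle n → ℝ)
    (htz_mem : ∀ b : Bundle n, b ≠ ∅ → tz b ∈ Set.Ioo t0 t1)
    (htz_zero : ∀ b : Bundle n, b ≠ ∅ → φ b (tz b) = 0)
    (htz_uniq : ∀ b : Bundle n, b ≠ ∅ → ∀ s ∈ Set.Icc t0 t1, φ b s = 0 → s = tz b)
    (hmono : ∀ b b' : Bundle n, b ⊂ b' → φ b t1 < φ b' t1)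
    (br : Bundle n) (hbr : br ≠ ∅)
    (hroot1 : ∀ b : Bundle n, b ≠ ∅ → b ≠ br → tz br < tz b)
    (hroot2 : ∀ b : Bundle n, b ≠ ∅ → ¬ br ⊆ b →
      tz (b ∪ br) ≤ max (tz b) (tz br)) :
    ∀ S : Finset (Bundle n), MinimalOptimalMenu φ t0 t1 S →
      IsTreeMenu S ∨ IsNestedMenu S := by
  intro S hS
  by_cases hnested : IsNestedMenu S
  · exact Or.inr hnested
  simp only [IsNestedMenu, not_forall, not_or] at hnested
  obtain ⟨b1, hb1, b2, hb2, h12, h21⟩ := hnested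
  have hbrS : br ∈ S :=
    hS.1.mem_of_tz_lt hcont hempty hneg hpos htz_mem htz_uniq hbr hroot1
  refine Or.inl ⟨⟨br, hbrS, hbr, fun b hbS hb => ?_⟩, b1, hb1, b2, hb2, h12, h21⟩
  exact hS.subset_of_mem hcont hscd hempty hneg hpos htz_mem htz_zero htz_uniq hmono hbr hbrS
    hroot1 hroot2 hbS hb

/-- **Proposition 34.** Under MD, SCD*, the boundary assumptions and strict
monotonicity of the top type's valuation in strict set inclusion, if some nonempty
bundle b_r has the strictly largest sold-alone quantity and the partial union quantity
condition holds for bundles not containing b_r, then the minimal optimal menu is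
either a tree menu or a nested menu. -/
theorem stmt12 {n : ℕ} (hn : 1 ≤ n) (t0 t1 : ℝ) (ht : t0 < t1)
    (φ : Bundle n → ℝ → ℝ)
    (hcont : ∀ b : Bundle n, ContinuousOn (φ b) (Set.Icc t0 t1))
    (hdist : Distinct φ t0 t1)
    (hmd : MD φ t0 t1)
    (hscd : SCDstar φ t0 t1)
    (hempty : ∀ t ∈ Set.Icc t0 t1, φ (∅ : Bundle n) t = 0)
    (hneg : ∀ b : Bundle n, b ≠ ∅ → φ b t0 < 0)
    (hpos : ∀ b : Bundle n, b ≠ ∅ → 0 < φ b t1)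
    (tz : Bundle n → ℝ)
    (htz_mem : ∀ b : Bundle n, b ≠ ∅ → tz b ∈ Set.Ioo t0 t1)
    (htz_zero : ∀ b : Bundle n, b ≠ ∅ → φ b (tz b) = 0)
    (htz_uniq : ∀ b : Bundle n, b ≠ ∅ → ∀ s ∈ Set.Icc t0 t1, φ b s = 0 → s = tz b)
    (hmono : ∀ b b' : Bundle n, b ⊂ b' → φ b t1 < φ b' t1)
    (br : Bundle n) (hbr : br ≠ ∅)
    (hroot1 : ∀ b : Bundle n, b ≠ ∅ → b ≠ br → tz br < tz b)
    (hroot2 : ∀ b : Bundle n, b ≠ ∅ → ¬ br ⊆ b →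
      tz (b ∪ br) ≤ max (tz b) (tz br)) :
    ∀ S : Finset (Bundle n), MinimalOptimalMenu φ t0 t1 S →
      IsTreeMenu S ∨ IsNestedMenu S :=
  stmt12_general t0 t1 φ hcont hscd hempty hneg hpos tz htz_mem htz_zero htz_uniq hmono br hbr
    hroot1 hroot2

end Paper
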